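/- Let f be L-smooth and (γ, μ)-strongly-quasar-convex with respect to a global minimizer x*, let R ≥ ‖x₀ − x*‖, and run SGD for T iterations with constant step size α satisfying 0 < α ≤ γ/L and γμα ≤ 1. Then E‖x_T − x*‖² ≤ (1 − γμα)^T R² + ασ²/(γμ). -/

import Mathlib

/-!
Write `x_{t+1} - x* = (x_t - α ∇f(x_t) - x*) - α ξ_t` with noise `ξ_t = g_t - ∇f(x_t)`. The first
term is measurable with respect to the σ-algebra of the past stochastic gradients, while `ξ_t` has
conditional mean zero, so the cross term vanishes in expectation and
`E‖x_{t+1} - x*‖² = E‖x_t - α ∇f(x_t) - x*‖² + α² E‖ξ_t‖² ≤ E‖x_t - α ∇f(x_t) - x*‖² + α² σ²`.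

For the exact gradient step, strong quasar-convexity gives
`⟪∇f(y), y - x*⟫ ≥ γ (f(y) - f*) + (γμ/2) ‖y - x*‖²`, and `L`-smoothness at the minimizer gives
`‖∇f(y)‖² ≤ 2L (f(y) - f*)`. Since `αL ≤ γ` the function-value terms cancel, so the step contracts
`‖y - x*‖²` by the factor `1 - γμα`. Unrolling `a_{t+1} ≤ (1 - γμα) a_t + α²σ²` bounds the
accumulated noise by the geometric series `α²σ² / (γμα) = ασ² / (γμ)`.
-/

open MeasureTheory
open scoped RealInnerProductSpace

section Smooth

variable {E : Type*} [NormedAddCommGroup E] [InnerProductSpace ℝ E] [CompleteSpace E]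
  {f : E → ℝ} {f' : E → E} {L : ℝ}

theorem le_add_inner_add_sq_of_lipschitz_gradient (hgrad : ∀ y, HasGradientAt f (f' y) y)
    (hsmooth : ∀ y z, ‖f' y - f' z‖ ≤ L * ‖y - z‖) (y z : E) :
    f z ≤ f y + ⟪f' y, z - y⟫ + L / 2 * ‖z - y‖ ^ 2 := by
  set v := z - y
  set ψ : ℝ → ℝ := fun s => f (y + s • v) - s * ⟪f' y, v⟫ - L / 2 * ‖v‖ ^ 2 * s ^ 2
  have hψ : ∀ s : ℝ, HasDerivAt ψ (⟪f' (y + s • v) - f' y, v⟫ - L * ‖v‖ ^ 2 * s) s := by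
    intro s
    have hline : HasDerivAt (fun s : ℝ => y + s • v) v s := by
      simpa using ((hasDerivAt_id s).smul_const v).const_add y
    have hf := (hgrad (y + s • v)).hasFDerivAt.comp_hasDerivAt s hline
    have hquad := ((hasDerivAt_pow 2 s).const_mul (L / 2 * ‖v‖ ^ 2))
    refine ((hf.sub ((hasDerivAt_id s).mul_const ⟪f' y, v⟫)).sub hquad).congr_deriv ?_
    simp only [InnerProductSpace.toDual_apply_apply, inner_sub_left]
    ring
  have hanti : AntitoneOn ψ (Set.Ici 0) := by
    refine antitoneOn_of_hasDerivWithinAt_nonpos (convex_Ici 0)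
      (fun s _ => (hψ s).continuousAt.continuousWithinAt)
      (fun s _ => (hψ s).hasDerivWithinAt) fun s hs => ?_
    rw [interior_Ici, Set.mem_Ioi] at hs
    have hnorm : ‖y + s • v - y‖ = s * ‖v‖ := by
      rw [add_sub_cancel_left, norm_smul, Real.norm_of_nonneg hs.le]
    calc ⟪f' (y + s • v) - f' y, v⟫ - L * ‖v‖ ^ 2 * s
        ≤ ‖f' (y + s • v) - f' y‖ * ‖v‖ - L * ‖v‖ ^ 2 * s := by
          gcongr; exact real_inner_le_norm _ _
      _ ≤ L * ‖y + s • v - y‖ * ‖v‖ - L * ‖v‖ ^ 2 * s := by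
          gcongr; exact hsmooth _ _
      _ = 0 := by rw [hnorm]; ring
  have h01 := hanti (Set.self_mem_Ici) (Set.mem_Ici.2 zero_le_one) zero_le_one
  simp only [ψ, zero_smul, add_zero, one_smul, zero_mul, sub_zero, one_mul, ne_eq,
    OfNat.ofNat_ne_zero, not_false_eq_true, zero_pow, mul_zero, one_pow, mul_one, v,
    add_sub_cancel] at h01
  linarith

theorem norm_sq_le_of_lipschitz_gradient (hgrad : ∀ y, HasGradientAt f (f' y) y)
    (hsmooth : ∀ y z, ‖f' y - f' z‖ ≤ L * ‖y - z‖) (hL : 0 < L) {xstar : E}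
    (hmin : ∀ y, f xstar ≤ f y) (y : E) :
    ‖f' y‖ ^ 2 ≤ 2 * L * (f y - f xstar) := by
  have hdesc := le_add_inner_add_sq_of_lipschitz_gradient hgrad hsmooth y (y - L⁻¹ • f' y)
  rw [sub_sub_cancel_left, inner_neg_right, real_inner_smul_right, real_inner_self_eq_norm_sq,
    norm_neg, norm_smul, mul_pow, Real.norm_of_nonneg (inv_nonneg.2 hL.le)] at hdesc
  have hquad : L / 2 * ((L⁻¹) ^ 2 * ‖f' y‖ ^ 2) = L⁻¹ / 2 * ‖f' y‖ ^ 2 := by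
    field_simp
  have hdrop : L⁻¹ / 2 * ‖f' y‖ ^ 2 ≤ f y - f xstar := by
    linarith [hmin (y - L⁻¹ • f' y), hquad]
  calc ‖f' y‖ ^ 2 = 2 * L * (L⁻¹ / 2 * ‖f' y‖ ^ 2) := by field_simp
    _ ≤ 2 * L * (f y - f xstar) := by gcongr

def IsStronglyQuasarConvex (f : E → ℝ) (f' : E → E) (γ μ : ℝ) (xstar : E) : Prop :=
  ∀ y, f xstar ≥ f y + (1 / γ) * ⟪f' y, xstar - y⟫ + (μ / 2) * ‖y - xstar‖ ^ 2

theorem IsStronglyQuasarConvex.norm_sub_smul_sub_sq_le {γ μ α : ℝ} {xstar : E}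
    (hsqc : IsStronglyQuasarConvex f f' γ μ xstar) (hγ : 0 < γ)
    (hgrad : ∀ y, HasGradientAt f (f' y) y) (hsmooth : ∀ y z, ‖f' y - f' z‖ ≤ L * ‖y - z‖)
    (hL : 0 < L) (hmin : ∀ y, f xstar ≤ f y) (hα : 0 ≤ α) (hαL : α * L ≤ γ) (y : E) :
    ‖y - α • f' y - xstar‖ ^ 2 ≤ (1 - γ * μ * α) * ‖y - xstar‖ ^ 2 := by
  have hcorr : γ * (f y - f xstar) + γ * μ / 2 * ‖y - xstar‖ ^ 2 ≤ ⟪y - xstar, f' y⟫ := by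
    have h := hsqc y
    rw [one_div, ← neg_sub y xstar, inner_neg_right, real_inner_comm] at h
    calc γ * (f y - f xstar) + γ * μ / 2 * ‖y - xstar‖ ^ 2
        = γ * (f y - f xstar + μ / 2 * ‖y - xstar‖ ^ 2) := by ring
      _ ≤ γ * (γ⁻¹ * ⟪y - xstar, f' y⟫) := by gcongr; linarith
      _ = ⟪y - xstar, f' y⟫ := by field_simp
  have hgap : α ^ 2 * ‖f' y‖ ^ 2 ≤ 2 * α * γ * (f y - f xstar) := by
    have hopt : 0 ≤ f y - f xstar := sub_nonneg.2 (hmin y)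
    calc α ^ 2 * ‖f' y‖ ^ 2 ≤ α ^ 2 * (2 * L * (f y - f xstar)) := by
          gcongr; exact norm_sq_le_of_lipschitz_gradient hgrad hsmooth hL hmin y
      _ = 2 * α * (α * L) * (f y - f xstar) := by ring
      _ ≤ 2 * α * γ * (f y - f xstar) := by gcongr
  rw [sub_right_comm, norm_sub_sq_real, real_inner_smul_right, norm_smul, mul_pow,
    Real.norm_of_nonneg hα]
  linarith [mul_le_mul_of_nonneg_left hcorr (mul_nonneg zero_le_two hα)]

end Smooth

section ConditionalExpectation

variable {Ω E : Type*} {m m₀ : MeasurableSpace Ω} {μ : Measure Ω}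
  [NormedAddCommGroup E] [InnerProductSpace ℝ E] [CompleteSpace E]

theorem integral_inner_eq_zero_of_condExp_eq_zero (hm : m ≤ m₀) [SigmaFinite (μ.trim hm)]
    {φ ξ : Ω → E} (hφ : StronglyMeasurable[m] φ) (hφξ : Integrable (fun ω => ⟪φ ω, ξ ω⟫) μ)
    (hξ : Integrable ξ μ) (hξ0 : μ[ξ|m] =ᵐ[μ] 0) :
    ∫ ω, ⟪φ ω, ξ ω⟫ ∂μ = 0 := by
  have hpull := condExp_bilin_of_stronglyMeasurable_left (innerSL ℝ) hφ hφξ hξ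
  rw [← integral_condExp hm]
  refine integral_eq_zero_of_ae ?_
  filter_upwards [hpull, hξ0] with ω hω hω0
  refine hω.trans ?_
  simp [hω0]

theorem integral_norm_sub_smul_sq_of_condExp_eq_zero [IsFiniteMeasure μ] (hm : m ≤ m₀)
    {D ξ : Ω → E} (hD : StronglyMeasurable[m] D) (hD₂ : MemLp D 2 μ) (hξ₂ : MemLp ξ 2 μ)
    (hξ0 : μ[ξ|m] =ᵐ[μ] 0) (c : ℝ) :
    ∫ ω, ‖D ω - c • ξ ω‖ ^ 2 ∂μ = ∫ ω, ‖D ω‖ ^ 2 ∂μ + c ^ 2 * ∫ ω, ‖ξ ω‖ ^ 2 ∂μ := by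
  have hDξ : Integrable (fun ω => ⟪D ω, ξ ω⟫) μ :=
    memLp_one_iff_integrable.1 ((innerSL ℝ).memLp_of_bilin 1 hD₂ hξ₂)
  have horth := integral_inner_eq_zero_of_condExp_eq_zero hm hD hDξ (hξ₂.integrable one_le_two)
    hξ0
  have hexpand : ∀ ω, ‖D ω - c • ξ ω‖ ^ 2
      = ‖D ω‖ ^ 2 - 2 * c * ⟪D ω, ξ ω⟫ + c ^ 2 * ‖ξ ω‖ ^ 2 := fun ω => by
    rw [norm_sub_sq_real, real_inner_smul_right, norm_smul, mul_pow, Real.norm_eq_abs, sq_abs]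
    ring
  have hD2 : Integrable (fun ω => ‖D ω‖ ^ 2) μ := hD₂.integrable_norm_pow'
  have hξ2 : Integrable (fun ω => ‖ξ ω‖ ^ 2) μ := hξ₂.integrable_norm_pow'
  simp only [hexpand]
  rw [integral_add (f := fun ω => ‖D ω‖ ^ 2 - 2 * c * ⟪D ω, ξ ω⟫)
      (hD2.sub (hDξ.const_mul _)) (hξ2.const_mul _),
    integral_sub hD2 (hDξ.const_mul _),
    integral_const_mul, integral_const_mul, horth, mul_zero, sub_zero]

theorem integral_norm_sub_smul_sub_sq_le [IsProbabilityMeasure μ] (hm : m ≤ m₀) {G : E → E}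
    {L α σ q : ℝ} {xstar : E} {X g : Ω → E}
    (hG : ∀ y z, ‖G y - G z‖ ≤ L * ‖y - z‖) (hGstar : G xstar = 0)
    (hcontract : ∀ y, ‖y - α • G y - xstar‖ ^ 2 ≤ q * ‖y - xstar‖ ^ 2)
    (hX : StronglyMeasurable[m] X) (hX₂ : MemLp (fun ω => X ω - xstar) 2 μ) (hg₂ : MemLp g 2 μ)
    (hunbiased : μ[g|m] =ᵐ[μ] fun ω => G (X ω))
    (hvar : ∀ᵐ ω ∂μ, μ[fun ω' => ‖g ω' - G (X ω')‖ ^ 2|m] ω ≤ σ ^ 2) :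
    ∫ ω, ‖X ω - α • g ω - xstar‖ ^ 2 ∂μ ≤ q * ∫ ω, ‖X ω - xstar‖ ^ 2 ∂μ + α ^ 2 * σ ^ 2 := by
  have hGc : Continuous G :=
    (LipschitzWith.of_dist_le' (K := L) fun y z => by
      simpa only [dist_eq_norm] using hG y z).continuous
  have hGX : StronglyMeasurable[m] fun ω => G (X ω) := hGc.comp_stronglyMeasurable hX
  have hGX₂ : MemLp (fun ω => G (X ω)) 2 μ :=
    hX₂.of_le_mul (hGX.mono hm).aestronglyMeasurable
      (ae_of_all _ fun ω => by simpa only [hGstar, sub_zero] using hG (X ω) xstar)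
  set ξ := fun ω => g ω - G (X ω)
  set D := fun ω => X ω - α • G (X ω) - xstar
  have hξ₂ : MemLp ξ 2 μ := hg₂.sub hGX₂
  have hξ0 : μ[ξ|m] =ᵐ[μ] 0 := by
    refine (condExp_sub (hg₂.integrable one_le_two) (hGX₂.integrable one_le_two) m).trans ?_
    rw [condExp_of_stronglyMeasurable hm hGX (hGX₂.integrable one_le_two)]
    filter_upwards [hunbiased] with ω hω
    simp [hω]
  have hD : StronglyMeasurable[m] D := (hX.sub (hGX.const_smul α)).sub stronglyMeasurable_const
  have hD₂ : MemLp D 2 μ :=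
    (hX₂.sub (hGX₂.const_smul α)).ae_eq <| ae_of_all _ fun ω => by
      simp only [D, Pi.sub_apply, Pi.smul_apply]
      abel
  have hnoise : ∫ ω, ‖ξ ω‖ ^ 2 ∂μ ≤ σ ^ 2 := by
    calc ∫ ω, ‖ξ ω‖ ^ 2 ∂μ = ∫ ω, μ[fun ω' => ‖ξ ω'‖ ^ 2|m] ω ∂μ := (integral_condExp hm).symm
      _ ≤ ∫ _, σ ^ 2 ∂μ := integral_mono_ae integrable_condExp (integrable_const _) hvar
      _ = σ ^ 2 := by simp
  have hdrift : ∫ ω, ‖D ω‖ ^ 2 ∂μ ≤ q * ∫ ω, ‖X ω - xstar‖ ^ 2 ∂μ := by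
    rw [← integral_const_mul]
    exact integral_mono hD₂.integrable_norm_pow' (hX₂.integrable_norm_pow'.const_mul q)
      fun ω => hcontract (X ω)
  calc ∫ ω, ‖X ω - α • g ω - xstar‖ ^ 2 ∂μ = ∫ ω, ‖D ω - α • ξ ω‖ ^ 2 ∂μ := by
        congr with ω
        simp only [D, ξ, smul_sub]
        abel_nf
    _ = ∫ ω, ‖D ω‖ ^ 2 ∂μ + α ^ 2 * ∫ ω, ‖ξ ω‖ ^ 2 ∂μ :=
        integral_norm_sub_smul_sq_of_condExp_eq_zero hm hD hD₂ hξ₂ hξ0 α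
    _ ≤ q * ∫ ω, ‖X ω - xstar‖ ^ 2 ∂μ + α ^ 2 * σ ^ 2 := by gcongr

end ConditionalExpectation

section Iterates

variable {Ω E : Type*} [MeasurableSpace E]

abbrev sigmaBefore (g : ℕ → Ω → E) (t : ℕ) : MeasurableSpace Ω :=
  ⨆ i ∈ Finset.range t, MeasurableSpace.comap (g i) inferInstance

theorem sigmaBefore_le [MeasurableSpace Ω] {g : ℕ → Ω → E} (hg : ∀ i, Measurable (g i)) (t : ℕ) :
    sigmaBefore g t ≤ ‹MeasurableSpace Ω› :=
  iSup₂_le fun i _ => (hg i).comap_le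

theorem comap_le_sigmaBefore_succ (g : ℕ → Ω → E) (t : ℕ) :
    MeasurableSpace.comap (g t) inferInstance ≤ sigmaBefore g (t + 1) :=
  le_iSup₂_of_le t (Finset.self_mem_range_succ t) le_rfl

theorem sigmaBefore_mono (g : ℕ → Ω → E) : Monotone (sigmaBefore g) := fun _ _ hst =>
  iSup₂_mono' fun i hi => ⟨i, Finset.range_subset_range.2 hst hi, le_rfl⟩

theorem measurable_sigmaBefore_of_sub_smul [NormedAddCommGroup E] [NormedSpace ℝ E]
    [BorelSpace E] [SecondCountableTopology E] {g x : ℕ → Ω → E} {x₀ : E} {α : ℝ}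
    (hx0 : x 0 = fun _ => x₀) (hstep : ∀ t, x (t+1) = fun ω => x t ω - α • g t ω) (t : ℕ) :
    Measurable[sigmaBefore g t] (x t) := by
  induction t with
  | zero => rw [hx0]; exact measurable_const
  | succ t ih =>
    rw [hstep t]
    exact (ih.mono (sigmaBefore_mono g t.le_succ) le_rfl).sub
      ((Measurable.of_comap_le (comap_le_sigmaBefore_succ g t)).const_smul α)

end Iterates

theorem le_pow_mul_add_div_of_le_mul_add {a : ℕ → ℝ} {q c : ℝ} (hq₀ : 0 ≤ q) (hq₁ : q < 1)
    (hc : 0 ≤ c) (h : ∀ t, a (t + 1) ≤ q * a t + c) (T : ℕ) :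
    a T ≤ q ^ T * a 0 + c / (1 - q) := by
  have hq : 0 < 1 - q := sub_pos.2 hq₁
  induction T with
  | zero => simpa using div_nonneg hc hq.le
  | succ T ih =>
    calc a (T + 1) ≤ q * (q ^ T * a 0 + c / (1 - q)) + c := by
          linarith [h T, mul_le_mul_of_nonneg_left ih hq₀]
      _ = q ^ (T + 1) * a 0 + c / (1 - q) := by field_simp; ring

theorem sgd_strongly_quasar_distance_general
    {Ω : Type*} [MeasurableSpace Ω] (P : Measure Ω) [IsProbabilityMeasure P]
    {n : ℕ} (f : EuclideanSpace ℝ (Fin n) → ℝ)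
    (f' : EuclideanSpace ℝ (Fin n) → EuclideanSpace ℝ (Fin n))
    (xstar x₀ : EuclideanSpace ℝ (Fin n))
    (L γ μ σ R α : ℝ) (T : ℕ)
    (x g : ℕ → Ω → EuclideanSpace ℝ (Fin n))
    (hgrad : ∀ y, HasGradientAt f (f' y) y)
    (hmin : ∀ y, f xstar ≤ f y)
    (hγ0 : 0 < γ) (hμ : 0 < μ)
    (hsqc : ∀ y, f xstar ≥ f y + (1/γ) * ⟪f' y, xstar - y⟫ + (μ/2) * ‖y - xstar‖^2)
    (hsmooth : ∀ y z, ‖f' y - f' z‖ ≤ L * ‖y - z‖)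
    (hR : ‖x₀ - xstar‖ ≤ R)
    (hα0 : 0 < α) (hα1 : α ≤ γ/L) (hα2 : γ*μ*α ≤ 1)
    (hx0 : x 0 = fun _ => x₀)
    (hstep : ∀ t, x (t+1) = fun ω => x t ω - α • g t ω)
    (hgmeas : ∀ t, Measurable (g t))
    (hgsqint : ∀ t, Integrable (fun ω => ‖g t ω‖^2) P)
    (hunbiased : ∀ t,
      MeasureTheory.condExp
          (⨆ i ∈ Finset.range t, MeasurableSpace.comap (g i) inferInstance) P (g t)
        =ᵐ[P] fun ω => f' (x t ω))
    (hvar : ∀ t, ∀ᵐ ω ∂P,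
      MeasureTheory.condExp
          (⨆ i ∈ Finset.range t, MeasurableSpace.comap (g i) inferInstance) P
          (fun ω' => ‖g t ω' - f' (x t ω')‖^2) ω ≤ σ^2)
    (hsqint : ∀ t, Integrable (fun ω => ‖x t ω - xstar‖^2) P)
:    ∫ ω, ‖x T ω - xstar‖^2 ∂P ≤ (1 - γ*μ*α)^T * R^2 + α*σ^2/(γ*μ) := by
  have hL : 0 < L := (div_pos_iff_of_pos_left hγ0).1 (hα0.trans_le hα1)
  have hcritical : f' xstar = 0 := by
    simpa using norm_sq_le_of_lipschitz_gradient hgrad hsmooth hL hmin xstar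
  have hcontract := IsStronglyQuasarConvex.norm_sub_smul_sub_sq_le hsqc hγ0 hgrad hsmooth hL hmin
    hα0.le ((le_div_iff₀ hL).1 hα1)
  have hrec : ∀ t, ∫ ω, ‖x (t + 1) ω - xstar‖ ^ 2 ∂P
      ≤ (1 - γ * μ * α) * ∫ ω, ‖x t ω - xstar‖ ^ 2 ∂P + α ^ 2 * σ ^ 2 := fun t => by
    have hxt := measurable_sigmaBefore_of_sub_smul hx0 hstep t
    rw [hstep t]
    exact integral_norm_sub_smul_sub_sq_le (sigmaBefore_le hgmeas t) hsmooth hcritical hcontract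
      hxt.stronglyMeasurable
      ((memLp_two_iff_integrable_sq_norm
        ((hxt.mono (sigmaBefore_le hgmeas t) le_rfl).sub_const xstar).aestronglyMeasurable).2
        (hsqint t))
      ((memLp_two_iff_integrable_sq_norm (hgmeas t).aestronglyMeasurable).2 (hgsqint t))
      (hunbiased t) (hvar t)
  have hγμα : 0 < γ * μ * α := by positivity
  have hunroll := le_pow_mul_add_div_of_le_mul_add (a := fun t => ∫ ω, ‖x t ω - xstar‖ ^ 2 ∂P)
    (by linarith) (by linarith) (by positivity) hrec T
  have hinit : ∫ ω, ‖x 0 ω - xstar‖ ^ 2 ∂P = ‖x₀ - xstar‖ ^ 2 := by simp [hx0]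
  have hnoise : α ^ 2 * σ ^ 2 / (1 - (1 - γ * μ * α)) = α * σ ^ 2 / (γ * μ) := by
    rw [sub_sub_cancel]
    field_simp
  rw [hinit, hnoise] at hunroll
  refine hunroll.trans ?_
  gcongr

theorem sgd_strongly_quasar_distance
    {Ω : Type*} [MeasurableSpace Ω] (P : Measure Ω) [IsProbabilityMeasure P]
    {n : ℕ} (f : EuclideanSpace ℝ (Fin n) → ℝ)
    (f' : EuclideanSpace ℝ (Fin n) → EuclideanSpace ℝ (Fin n))
    (xstar x₀ : EuclideanSpace ℝ (Fin n))
    (L γ μ σ R α : ℝ) (T : ℕ)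
    (x g : ℕ → Ω → EuclideanSpace ℝ (Fin n))
    (hgrad : ∀ y, HasGradientAt f (f' y) y)
    (hmin : ∀ y, f xstar ≤ f y)
    (hγ0 : 0 < γ) (hγ1 : γ ≤ 1) (hμ : 0 < μ)
    (hsqc : ∀ y, f xstar ≥ f y + (1/γ) * ⟪f' y, xstar - y⟫ + (μ/2) * ‖y - xstar‖^2)
    (hsmooth : ∀ y z, ‖f' y - f' z‖ ≤ L * ‖y - z‖)
    (hR : ‖x₀ - xstar‖ ≤ R)
    (hα0 : 0 < α) (hα1 : α ≤ γ/L) (hα2 : γ*μ*α ≤ 1)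
    (hx0 : x 0 = fun _ => x₀)
    (hstep : ∀ t, x (t+1) = fun ω => x t ω - α • g t ω)
    (hgmeas : ∀ t, Measurable (g t))
    (hgint : ∀ t, Integrable (g t) P)
    (hgsqint : ∀ t, Integrable (fun ω => ‖g t ω‖^2) P)
    (hunbiased : ∀ t,
      MeasureTheory.condExp
          (⨆ i ∈ Finset.range t, MeasurableSpace.comap (g i) inferInstance) P (g t)
        =ᵐ[P] fun ω => f' (x t ω))
    (hvar : ∀ t, ∀ᵐ ω ∂P,
      MeasureTheory.condExp
          (⨆ i ∈ Finset.range t, MeasurableSpace.comap (g i) inferInstance) P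
          (fun ω' => ‖g t ω' - f' (x t ω')‖^2) ω ≤ σ^2)
    (hfint : ∀ t, Integrable (fun ω => f (x t ω)) P)
    (hsqint : ∀ t, Integrable (fun ω => ‖x t ω - xstar‖^2) P)
:    ∫ ω, ‖x T ω - xstar‖^2 ∂P ≤ (1 - γ*μ*α)^T * R^2 + α*σ^2/(γ*μ) :=
  sgd_strongly_quasar_distance_general P f f' xstar x₀ L γ μ σ R α T x g hgrad hmin hγ0 hμ hsqc
    hsmooth hR hα0 hα1 hα2 hx0 hstep hgmeas hgsqint hunbiased hvar hsqint
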